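/- Let p ≥ 1, m ≥ 1, n = p + m, and write points of ℝⁿ as x = (x₀, v) with x₀ ∈ ℝᵖ, v ∈ ℝᵐ, and points of the dual as ξ = (ξ₁, ξ₂). Let g be the linear transformation of ℝⁿ acting as the identity on the ℝᵖ-factor and as g′ on the ℝᵐ-factor, where g′ − 1 is invertible. Then for every Schwartz function h ∈ 𝒮(ℝⁿ×ℝⁿ; ℂ): lim_{ℏ → 0⁺} ℏ^{−m} ∫_{ℝⁿ} ĥ(x, (gx − x)/ℏ) dx = ((2π)ᵐ / |det(g′ − 1)|) · ∫_{ℝᵖ} ∫_{ℝᵖ} h((x₀, 0), (ξ₁, 0)) dξ₁ dx₀, where ĥ(x,y) = ∫_{ℝⁿ} h(x,ξ) e^{−i⟨y,ξ⟩} dξ is the Fourier transform of h in the second variable. -/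

import Mathlib

open MeasureTheory RealInnerProductSpace Filter

/-- Fourier transform in the second variable, on the product space
`ℝⁿ = ℝᵖ × ℝᵐ` (with the inner product `⟨y,ξ⟩ = ⟨y₁,ξ₁⟩ + ⟨y₂,ξ₂⟩`):
`ĥ(x,y) = ∫ h(x,ξ) e^{−i⟨y,ξ⟩} dξ`. -/
noncomputable def fhat2 (p m : ℕ)
    (h : (EuclideanSpace ℝ (Fin p) × EuclideanSpace ℝ (Fin m)) ×
         (EuclideanSpace ℝ (Fin p) × EuclideanSpace ℝ (Fin m)) → ℂ)
    (x y : EuclideanSpace ℝ (Fin p) × EuclideanSpace ℝ (Fin m)) : ℂ :=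
  ∫ ξ : EuclideanSpace ℝ (Fin p) × EuclideanSpace ℝ (Fin m),
    h (x, ξ) * Complex.exp (-(Complex.I * ((⟪y.1, ξ.1⟫ + ⟪y.2, ξ.2⟫ : ℝ) : ℂ)))

/-!
Write `Ψ(x, w) = ∫ h(x, ξ) 𝐞(-⟪ξ₂, w⟫) dξ`, so that `ĥ(x, (0, u)) = Ψ(x, u / 2π)`. With
`T = g′ − 1`, the substitution `x = (x₀, 2πℏ T⁻¹ w)` turns `ℏ⁻ᵐ ∫ ĥ(x, (gx − x)/ℏ) dx` into
`((2π)ᵐ / |det T|) ∫ Ψ((x₀, 2πℏ T⁻¹ w), w) d(x₀, w)`. Integrating by parts in `ξ`, the Schwartz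
decay of `h` gives `|Ψ(x, w)| ≤ C (1 + |x|)⁻ᵃ (1 + |w|)⁻ⁿ` for all `a, n`, which dominates the
integrand uniformly in `ℏ`; hence the limit `ℏ → 0` is `∫∫ Ψ((x₀, 0), w) dw dx₀`, and Fourier
inversion in the normal variable gives `∫ Ψ(x, w) dw = ∫ h(x, (ξ₁, 0)) dξ₁`.
-/

open scoped FourierTransform SchwartzMap Topology

section ChangeOfVariables

variable {E F : Type*} [NormedAddCommGroup E] [NormedSpace ℝ E] [MeasurableSpace E]
  [BorelSpace E] [FiniteDimensional ℝ E] [NormedAddCommGroup F] [NormedSpace ℝ F]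

theorem integral_comp_linearMap_of_det_ne_zero (μ : Measure E) [μ.IsAddHaarMeasure]
    {A : E →ₗ[ℝ] E} (hA : LinearMap.det A ≠ 0) (φ : E → F) :
    ∫ x, φ (A x) ∂μ = |LinearMap.det A|⁻¹ • ∫ x, φ x ∂μ := by
  have hemb : MeasurableEmbedding A :=
    (A.equivOfDetNeZero hA).toContinuousLinearEquiv.toHomeomorph.measurableEmbedding
  rw [← hemb.integral_map, Measure.map_linearMap_addHaar_eq_smul_addHaar μ hA,
    integral_smul_measure, ENNReal.toReal_ofReal (abs_nonneg _), abs_inv]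

end ChangeOfVariables

section Product

variable {U V E : Type*} [NormedAddCommGroup U] [InnerProductSpace ℝ U] [FiniteDimensional ℝ U]
  [MeasurableSpace U] [BorelSpace U] [NormedAddCommGroup V] [InnerProductSpace ℝ V]
  [FiniteDimensional ℝ V] [MeasurableSpace V] [BorelSpace V]
  [NormedAddCommGroup E] [NormedSpace ℝ E]

instance : (volume : Measure (U × V)).IsAddHaarMeasure := Measure.prod.instIsAddHaarMeasure _ _

theorem integral_comp_inv_smul_snd (T : V ≃ₗ[ℝ] V) {c : ℝ} (hc : c ≠ 0) (Φ : U × V → V → E) :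
    ∫ x : U × V, Φ x (c⁻¹ • T x.2) =
      (|c| ^ Module.finrank ℝ V / |LinearMap.det (T : V →ₗ[ℝ] V)|) •
        ∫ z : U × V, Φ (z.1, c • T.symm z.2) z.2 := by
  set A : U × V →ₗ[ℝ] U × V := LinearMap.prodMap LinearMap.id (c • (T.symm : V →ₗ[ℝ] V))
  have hT : LinearMap.det (T : V →ₗ[ℝ] V) ≠ 0 := (LinearEquiv.isUnit_det' T).ne_zero
  have hdet : LinearMap.det A = c ^ Module.finrank ℝ V / LinearMap.det (T : V →ₗ[ℝ] V) := by
    simp [A, LinearMap.det_prodMap, LinearMap.det_smul, div_eq_mul_inv, LinearEquiv.det_coe_symm]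
  have hA : LinearMap.det A ≠ 0 := by rw [hdet]; exact div_ne_zero (pow_ne_zero _ hc) hT
  have key := integral_comp_linearMap_of_det_ne_zero volume hA (fun x => Φ x (c⁻¹ • T x.2))
  rw [hdet] at key
  simp only [A, LinearMap.prodMap_apply, LinearMap.id_apply, LinearMap.smul_apply,
    LinearEquiv.coe_coe, map_smul, LinearEquiv.apply_symm_apply, smul_smul,
    inv_mul_cancel₀ hc, one_smul] at key
  rw [key, smul_smul, abs_div, abs_pow, mul_inv_cancel₀ (by positivity), one_smul]

end Product

section FourierSnd

open Real

variable {U V E : Type*} [NormedAddCommGroup U] [InnerProductSpace ℝ U] [FiniteDimensional ℝ U]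
  [MeasurableSpace U] [BorelSpace U] [NormedAddCommGroup V] [InnerProductSpace ℝ V]
  [FiniteDimensional ℝ V] [MeasurableSpace V] [BorelSpace V]
  [NormedAddCommGroup E] [NormedSpace ℂ E]

noncomputable def fourierSnd (f : U × V → E) (w : V) : E :=
  ∫ ξ, 𝐞 (-⟪ξ.2, w⟫) • f ξ

theorem fourierSnd_eq_fourierIntegral (f : U × V → E) (w : V) :
    fourierSnd f w = VectorFourier.fourierIntegral 𝐞 volume
      ((innerSL ℝ).comp (ContinuousLinearMap.snd ℝ U V)).toLinearMap₁₂ f w :=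
  rfl

theorem norm_fourierSnd_le (f : U × V → E) (w : V) : ‖fourierSnd f w‖ ≤ ∫ ξ, ‖f ξ‖ := by
  rw [fourierSnd_eq_fourierIntegral]
  exact VectorFourier.norm_fourierIntegral_le_integral_norm _ _ _ _ _

theorem pow_mul_norm_fourierSnd_le {f : U × V → E} {n : ℕ} (hf : ContDiff ℝ n f)
    (hint : ∀ j ≤ n, Integrable (fun ξ => ‖iteratedFDeriv ℝ j f ξ‖)) (w : V) :
    ‖w‖ ^ n * ‖fourierSnd f w‖ ≤
      2 ^ n * ∑ j ∈ Finset.range (n + 1), ∫ ξ, ‖iteratedFDeriv ℝ j f ξ‖ := by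
  have key := VectorFourier.pow_mul_norm_iteratedFDeriv_fourierIntegral_le
    ((innerSL ℝ).comp (ContinuousLinearMap.snd ℝ U V)) (μ := volume) (K := 0) hf
    (fun k j hk hj => by
      obtain rfl : k = 0 := by exact_mod_cast le_antisymm hk bot_le
      simpa using hint j (by exact_mod_cast hj))
    (k := 0) le_rfl le_rfl ((0 : U), w) w
  -- the pairing `⟪ξ.2, w⟫` tested against `ξ = (0, w)` is `‖w‖ ^ 2`
  simp only [ContinuousLinearMap.comp_apply, ContinuousLinearMap.coe_snd', coe_innerSL_apply,
    inner_self_eq_norm_sq_to_K, ringHom_apply, abs_pow, abs_norm, norm_iteratedFDeriv_zero,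
    Prod.norm_mk, norm_zero, norm_nonneg, sup_of_le_right, pow_zero, mul_one, CharP.cast_eq_zero,
    mul_zero, zero_add, Finset.range_one, Finset.singleton_product, Finset.sum_map,
    Function.Embedding.coeFn_mk, one_mul] at key
  rw [← fourierSnd_eq_fourierIntegral] at key
  rw [show (‖w‖ ^ 2) ^ n = ‖w‖ ^ n * ‖w‖ ^ n by ring, mul_assoc, mul_assoc] at key
  rcases (pow_nonneg (norm_nonneg w) n).eq_or_lt with h0 | hpos
  · rw [← h0, zero_mul]
    positivity
  · exact le_of_mul_le_mul_left key hpos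

theorem fourierSnd_eq_fourier_integral_fst {f : U × V → E} (hf : Integrable f) (w : V) :
    fourierSnd f w = 𝓕 (fun t => ∫ ξ₁, f (ξ₁, t)) w := by
  have hint : Integrable (fun ξ : U × V => 𝐞 (-⟪ξ.2, w⟫) • f ξ) :=
    (fourierIntegral_convergent_iff' ((innerSL ℝ).comp (ContinuousLinearMap.snd ℝ U V)) w).2 hf
  rw [Measure.volume_eq_prod] at hint
  rw [fourierSnd, Measure.volume_eq_prod, integral_prod_symm _ hint, Real.fourier_eq]
  simp_rw [Circle.smul_def, integral_smul]

variable [CompleteSpace E]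

theorem integral_fourierSnd {f : U × V → E} (hf : Integrable f)
    (hcont : ContinuousAt (fun t => ∫ ξ₁, f (ξ₁, t)) 0) (hF : Integrable (fourierSnd f)) :
    ∫ w, fourierSnd f w = ∫ ξ₁, f (ξ₁, 0) := by
  have hq : Integrable (fun t => ∫ ξ₁, f (ξ₁, t)) := by
    rw [Measure.volume_eq_prod] at hf
    exact hf.integral_prod_right
  have hFq : fourierSnd f = 𝓕 (fun t => ∫ ξ₁, f (ξ₁, t)) :=
    funext (fourierSnd_eq_fourier_integral_fst hf)
  rw [hFq] at hF ⊢
  simpa [Real.fourierInv_eq] using hq.fourierInv_fourier_eq hF hcont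

end FourierSnd

section SliceDerivatives

variable {X Y F : Type*} [NormedAddCommGroup X] [NormedSpace ℝ X] [NormedAddCommGroup Y]
  [NormedSpace ℝ Y] [NormedAddCommGroup F] [NormedSpace ℝ F]

theorem norm_iteratedFDeriv_comp_prodMk_le {f : X × Y → F} {j : ℕ} (hf : ContDiff ℝ j f)
    (x : X) (y : Y) :
    ‖iteratedFDeriv ℝ j (fun y => f (x, y)) y‖ ≤ ‖iteratedFDeriv ℝ j f (x, y)‖ := by
  have hshift : ContDiff ℝ j (fun z : X × Y => f ((x, 0) + z)) :=
    hf.comp (contDiff_const.add contDiff_id)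
  have hslice : (fun y => f (x, y)) =
      (fun z => f ((x, 0) + z)) ∘ ContinuousLinearMap.inr ℝ X Y := by
    ext y; simp
  rw [hslice, (ContinuousLinearMap.inr ℝ X Y).iteratedFDeriv_comp_right hshift y le_rfl,
    iteratedFDeriv_comp_add_left]
  calc _ ≤ ‖iteratedFDeriv ℝ j f ((x, 0) + (0, y))‖ *
        ∏ _ : Fin j, ‖ContinuousLinearMap.inr ℝ X Y‖ :=
        ContinuousMultilinearMap.norm_compContinuousLinearMap_le _ _
    _ ≤ ‖iteratedFDeriv ℝ j f (x, y)‖ := by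
        simp only [Prod.mk_add_mk, add_zero, zero_add]
        exact mul_le_of_le_one_right (norm_nonneg _)
          (Finset.prod_le_one (fun _ _ => norm_nonneg _)
            (fun _ _ => ContinuousLinearMap.norm_inr_le_one ℝ X Y))

theorem SchwartzMap.exists_norm_iteratedFDeriv_comp_prodMk_le (h : 𝓢(X × Y, F)) (a b n : ℕ) :
    ∃ C, ∀ j ≤ n, ∀ x y, ‖iteratedFDeriv ℝ j (fun y => h (x, y)) y‖ ≤
      C * (1 + ‖x‖) ^ (-(a : ℝ)) * (1 + ‖y‖) ^ (-(b : ℝ)) := by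
  refine ⟨2 ^ (a + b) * (Finset.Iic (a + b, n)).sup (fun m => SchwartzMap.seminorm ℝ m.1 m.2) h,
    fun j hj x y => ?_⟩
  have hdecay := h.one_add_le_sup_seminorm_apply (𝕜 := ℝ) (m := (a + b, n)) le_rfl hj (x, y)
  have hweight : (1 + ‖x‖) ^ a * (1 + ‖y‖) ^ b ≤ (1 + ‖(x, y)‖) ^ (a + b) := by
    rw [pow_add]
    gcongr
    exacts [norm_fst_le (x, y), norm_snd_le (x, y)]
  rw [Real.rpow_neg (by positivity), Real.rpow_neg (by positivity), Real.rpow_natCast,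
    Real.rpow_natCast, mul_assoc, ← mul_inv, ← div_eq_mul_inv, le_div_iff₀ (by positivity)]
  calc _ ≤ ‖iteratedFDeriv ℝ j h (x, y)‖ * (1 + ‖(x, y)‖) ^ (a + b) :=
        mul_le_mul (norm_iteratedFDeriv_comp_prodMk_le
          ((h.smooth ⊤).of_le (by exact_mod_cast le_top)) x y)
          hweight (by positivity) (norm_nonneg _)
    _ ≤ _ := by rw [mul_comm]; exact hdecay

theorem SchwartzMap.exists_norm_le_one_add_norm_snd (h : 𝓢(X × Y, F)) (b : ℕ) :
    ∃ C, ∀ x y, ‖h (x, y)‖ ≤ C * (1 + ‖y‖) ^ (-(b : ℝ)) := by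
  obtain ⟨C, hC⟩ := h.exists_norm_iteratedFDeriv_comp_prodMk_le 0 b 0
  exact ⟨C, fun x y => by simpa using hC 0 le_rfl x y⟩

end SliceDerivatives

section SliceIntegrals

variable {X Y F : Type*} [NormedAddCommGroup X] [NormedSpace ℝ X] [NormedAddCommGroup Y]
  [NormedSpace ℝ Y] [FiniteDimensional ℝ Y] [MeasurableSpace Y] [BorelSpace Y]
  [NormedAddCommGroup F] [NormedSpace ℝ F] (μ : Measure Y) [μ.IsAddHaarMeasure]

theorem integrable_one_add_norm_rpow_neg_finrank_add_one :
    Integrable (fun y : Y => (1 + ‖y‖) ^ (-((Module.finrank ℝ Y + 1 : ℕ) : ℝ))) μ :=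
  integrable_one_add_norm (by push_cast; linarith)

theorem SchwartzMap.exists_integral_norm_iteratedFDeriv_comp_prodMk_le (h : 𝓢(X × Y, F))
    (a n : ℕ) : ∃ C, ∀ j ≤ n, ∀ x,
      Integrable (fun y => ‖iteratedFDeriv ℝ j (fun y => h (x, y)) y‖) μ ∧
      ∫ y, ‖iteratedFDeriv ℝ j (fun y => h (x, y)) y‖ ∂μ ≤ C * (1 + ‖x‖) ^ (-(a : ℝ)) := by
  obtain ⟨C, hC⟩ := h.exists_norm_iteratedFDeriv_comp_prodMk_le a (Module.finrank ℝ Y + 1) n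
  refine ⟨C * ∫ y, (1 + ‖y‖) ^ (-((Module.finrank ℝ Y + 1 : ℕ) : ℝ)) ∂μ, fun j hj x => ?_⟩
  have hbound := (integrable_one_add_norm_rpow_neg_finrank_add_one μ).const_mul
    (C * (1 + ‖x‖) ^ (-(a : ℝ)))
  have hsmooth : ContDiff ℝ j (fun y => h (x, y)) :=
    ((h.smooth ⊤).comp (contDiff_const.prodMk contDiff_id)).of_le (by exact_mod_cast le_top)
  have hint : Integrable (fun y => ‖iteratedFDeriv ℝ j (fun y => h (x, y)) y‖) μ :=
    hbound.mono' (hsmooth.continuous_iteratedFDeriv le_rfl).norm.aestronglyMeasurable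
      (Eventually.of_forall fun y => by simpa using hC j hj x y)
  refine ⟨hint, ?_⟩
  calc _ ≤ ∫ y, C * (1 + ‖x‖) ^ (-(a : ℝ)) *
        (1 + ‖y‖) ^ (-((Module.finrank ℝ Y + 1 : ℕ) : ℝ)) ∂μ :=
        integral_mono hint hbound fun y => hC j hj x y
    _ = _ := by rw [integral_const_mul]; ring

theorem SchwartzMap.integrable_comp_prodMk (h : 𝓢(X × Y, F)) (x : X) :
    Integrable (fun y => h (x, y)) μ := by
  obtain ⟨C, hC⟩ := h.exists_integral_norm_iteratedFDeriv_comp_prodMk_le μ 0 0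
  refine (integrable_norm_iff ?_).1 (by simpa using (hC 0 le_rfl x).1)
  exact (h.continuous.comp (continuous_const.prodMk continuous_id)).aestronglyMeasurable

theorem SchwartzMap.continuous_integral_fst {Z : Type*} [NormedAddCommGroup Z] [NormedSpace ℝ Z]
    (h : 𝓢(X × (Y × Z), F)) (x : X) : Continuous (fun t : Z => ∫ y, h (x, (y, t)) ∂μ) := by
  obtain ⟨C, hC⟩ := h.exists_norm_le_one_add_norm_snd (Module.finrank ℝ Y + 1)
  have hC0 : 0 ≤ C := by simpa using (norm_nonneg _).trans (hC x 0)
  refine continuous_of_dominated (fun t => ?_) (fun t => Eventually.of_forall fun y => ?_)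
    ((integrable_one_add_norm_rpow_neg_finrank_add_one μ).const_mul C)
    (Eventually.of_forall fun y => ?_)
  · exact (h.continuous.comp (continuous_const.prodMk
      (continuous_id.prodMk continuous_const))).aestronglyMeasurable
  · refine (hC x (y, t)).trans (mul_le_mul_of_nonneg_left ?_ hC0)
    exact Real.rpow_le_rpow_of_nonpos (by positivity) (by simp [Prod.norm_def])
      (by push_cast; linarith)
  · exact h.continuous.comp (continuous_const.prodMk (continuous_const.prodMk continuous_id))

end SliceIntegrals

section SchwartzFourierSnd

open Module

variable {X U V E : Type*} [NormedAddCommGroup X] [NormedSpace ℝ X]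
  [NormedAddCommGroup U] [InnerProductSpace ℝ U] [FiniteDimensional ℝ U]
  [MeasurableSpace U] [BorelSpace U] [NormedAddCommGroup V] [InnerProductSpace ℝ V]
  [FiniteDimensional ℝ V] [MeasurableSpace V] [BorelSpace V]
  [NormedAddCommGroup E] [NormedSpace ℂ E] (h : 𝓢(X × (U × V), E))

theorem SchwartzMap.continuous_fourierSnd :
    Continuous (fun p : X × V => fourierSnd (fun ξ => h (p.1, ξ)) p.2) := by
  obtain ⟨C, hC⟩ := h.exists_norm_le_one_add_norm_snd (finrank ℝ (U × V) + 1)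
  have hcont : Continuous (fun q : (X × V) × (U × V) => 𝐞 (-⟪q.2.2, q.1.2⟫) • h (q.1.1, q.2)) :=
    (Real.continuous_fourierChar.comp (continuous_snd.snd.inner continuous_fst.snd).neg).smul
      (h.continuous.comp (continuous_fst.fst.prodMk continuous_snd))
  refine continuous_of_dominated (fun p => ?_) (fun p => Eventually.of_forall fun ξ => ?_)
    ((integrable_one_add_norm_rpow_neg_finrank_add_one volume).const_mul C)
    (Eventually.of_forall fun ξ => ?_)
  · exact (hcont.comp (continuous_const.prodMk continuous_id)).aestronglyMeasurable
  · simpa only [Circle.norm_smul] using hC p.1 ξ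
  · exact hcont.comp (continuous_id.prodMk continuous_const)

theorem SchwartzMap.exists_norm_fourierSnd_le (a n : ℕ) : ∃ C, ∀ x w,
    ‖fourierSnd (fun ξ => h (x, ξ)) w‖ ≤ C * (1 + ‖x‖) ^ (-(a : ℝ)) * (1 + ‖w‖) ^ (-(n : ℝ)) := by
  obtain ⟨C, hC⟩ := h.exists_integral_norm_iteratedFDeriv_comp_prodMk_le volume a n
  refine ⟨2 ^ n * ((n + 1) * C + 2 ^ n * ((n + 1) * C)), fun x w => ?_⟩
  set A := (n + 1) * C * (1 + ‖x‖) ^ (-(a : ℝ))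
  set I := fun j => ∫ ξ, ‖iteratedFDeriv ℝ j (fun ξ => h (x, ξ)) ξ‖
  have hsum : ∑ j ∈ Finset.range (n + 1), I j ≤ A := by
    calc _ ≤ ∑ j ∈ Finset.range (n + 1), C * (1 + ‖x‖) ^ (-(a : ℝ)) :=
          Finset.sum_le_sum fun j hj => (hC j (Finset.mem_range_succ_iff.1 hj) x).2
      _ = A := by simp [A, mul_assoc]
  have hsmooth : ContDiff ℝ n (fun ξ => h (x, ξ)) :=
    ((h.smooth ⊤).comp (contDiff_const.prodMk contDiff_id)).of_le (by exact_mod_cast le_top)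
  have h0 : ‖fourierSnd (fun ξ => h (x, ξ)) w‖ ≤ A := by
    refine (norm_fourierSnd_le _ w).trans (le_trans ?_ hsum)
    simpa [I] using Finset.single_le_sum (f := I)
      (fun j _ => integral_nonneg fun _ => norm_nonneg _) (Finset.mem_range.2 n.succ_pos)
  have hn : ‖w‖ ^ (0 + n) * ‖fourierSnd (fun ξ => h (x, ξ)) w‖ ≤ 2 ^ n * A := by
    rw [zero_add]
    exact (pow_mul_norm_fourierSnd_le hsmooth (fun j hj => (hC j hj x).1) w).trans (by gcongr)
  have key := pow_mul_le_of_le_of_pow_mul_le (norm_nonneg w) (norm_nonneg _) h0 hn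
  rw [pow_zero, one_mul] at key
  exact key.trans_eq (by ring)

theorem SchwartzMap.integrable_fourierSnd (x : X) :
    Integrable (fourierSnd (fun ξ => h (x, ξ))) := by
  obtain ⟨C, hC⟩ := h.exists_norm_fourierSnd_le 0 (finrank ℝ V + 1)
  exact ((integrable_one_add_norm_rpow_neg_finrank_add_one volume).const_mul C).mono'
    (h.continuous_fourierSnd.comp (continuous_const.prodMk continuous_id)).aestronglyMeasurable
    (Eventually.of_forall fun w => by simpa using hC x w)

theorem SchwartzMap.integral_fourierSnd_comp_prodMk [CompleteSpace E] (x : X) :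
    ∫ w, fourierSnd (fun ξ => h (x, ξ)) w = ∫ ξ₁, h (x, (ξ₁, 0)) :=
  integral_fourierSnd (h.integrable_comp_prodMk volume x)
    (h.continuous_integral_fst volume x).continuousAt (h.integrable_fourierSnd x)

end SchwartzFourierSnd

section NormalLimit

open Module

variable {U V E : Type*} [NormedAddCommGroup U] [InnerProductSpace ℝ U] [FiniteDimensional ℝ U]
  [MeasurableSpace U] [BorelSpace U] [NormedAddCommGroup V] [InnerProductSpace ℝ V]
  [FiniteDimensional ℝ V] [MeasurableSpace V] [BorelSpace V]
  [NormedAddCommGroup E] [NormedSpace ℂ E] (h : 𝓢((U × V) × (U × V), E))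

theorem SchwartzMap.exists_integrable_bound_fourierSnd : ∃ B : U × V → ℝ, Integrable B ∧
    ∀ z y, ‖fourierSnd (fun ξ => h ((z.1, y), ξ)) z.2‖ ≤ B z := by
  obtain ⟨C, hC⟩ := h.exists_norm_fourierSnd_le (finrank ℝ U + 1) (finrank ℝ V + 1)
  have hC0 : 0 ≤ C := by simpa using (norm_nonneg _).trans (hC 0 0)
  refine ⟨fun z => C * ((1 + ‖z.1‖) ^ (-((finrank ℝ U + 1 : ℕ) : ℝ)) *
    (1 + ‖z.2‖) ^ (-((finrank ℝ V + 1 : ℕ) : ℝ))), ?_, fun z y => ?_⟩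
  · rw [Measure.volume_eq_prod]
    exact ((integrable_one_add_norm_rpow_neg_finrank_add_one volume).mul_prod
      (integrable_one_add_norm_rpow_neg_finrank_add_one volume)).const_mul C
  · refine (hC _ _).trans ?_
    rw [mul_assoc]
    refine mul_le_mul_of_nonneg_left (mul_le_mul_of_nonneg_right ?_ (by positivity)) hC0
    exact Real.rpow_le_rpow_of_nonpos (by positivity) (by simp [Prod.norm_def])
      (by push_cast; linarith)

theorem SchwartzMap.tendsto_integral_fourierSnd_smul (S : V →ₗ[ℝ] V) :
    Tendsto (fun c : ℝ => ∫ z : U × V, fourierSnd (fun ξ => h ((z.1, c • S z.2), ξ)) z.2)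
      (𝓝 0) (𝓝 (∫ z : U × V, fourierSnd (fun ξ => h ((z.1, 0), ξ)) z.2)) := by
  obtain ⟨B, hB, hbound⟩ := h.exists_integrable_bound_fourierSnd
  have hcont : Continuous (fun q : ℝ × (U × V) =>
      fourierSnd (fun ξ => h ((q.2.1, q.1 • S q.2.2), ξ)) q.2.2) :=
    h.continuous_fourierSnd.comp ((continuous_snd.fst.prodMk (continuous_fst.smul
      (S.continuous_of_finiteDimensional.comp continuous_snd.snd))).prodMk continuous_snd.snd)
  refine tendsto_integral_filter_of_dominated_convergence B
    (Eventually.of_forall fun c => ?_) (Eventually.of_forall fun c => ?_) hB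
    (Eventually.of_forall fun z => ?_)
  · exact (hcont.comp (continuous_const.prodMk continuous_id)).aestronglyMeasurable
  · exact Eventually.of_forall fun z => hbound z _
  · simpa [Function.comp_def] using
      (hcont.comp (continuous_id.prodMk (continuous_const (y := z)))).tendsto 0

theorem SchwartzMap.integral_fourierSnd_fst_zero [CompleteSpace E] :
    ∫ z : U × V, fourierSnd (fun ξ => h ((z.1, 0), ξ)) z.2 =
      ∫ x₀ : U, ∫ ξ₁ : U, h ((x₀, 0), (ξ₁, 0)) := by
  obtain ⟨B, hB, hbound⟩ := h.exists_integrable_bound_fourierSnd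
  have hint : Integrable (fun z : U × V => fourierSnd (fun ξ => h ((z.1, 0), ξ)) z.2) :=
    hB.mono' (h.continuous_fourierSnd.comp ((continuous_fst.prodMk continuous_const).prodMk
      continuous_snd)).aestronglyMeasurable (Eventually.of_forall fun z => hbound z 0)
  rw [Measure.volume_eq_prod] at hint ⊢
  rw [integral_prod _ hint]
  exact integral_congr_ae (Eventually.of_forall fun x₀ => h.integral_fourierSnd_comp_prodMk (x₀, 0))

end NormalLimit

theorem fhat2_zero_fst_eq_fourierSnd (p m : ℕ)
    (h : (EuclideanSpace ℝ (Fin p) × EuclideanSpace ℝ (Fin m)) ×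
         (EuclideanSpace ℝ (Fin p) × EuclideanSpace ℝ (Fin m)) → ℂ)
    (x : EuclideanSpace ℝ (Fin p) × EuclideanSpace ℝ (Fin m)) (u : EuclideanSpace ℝ (Fin m)) :
    fhat2 p m h x (0, u) = fourierSnd (fun ξ => h (x, ξ)) ((2 * Real.pi)⁻¹ • u) := by
  unfold fhat2 fourierSnd
  congr 1
  funext ξ
  rw [Circle.smul_def, Real.fourierChar_apply, smul_eq_mul, mul_comm]
  congr 2
  simp only [inner_zero_left, zero_add, inner_smul_right, real_inner_comm u]
  push_cast
  field_simp

theorem inv_pow_mul_integral_fhat2_eq (p m : ℕ)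
    (h : (EuclideanSpace ℝ (Fin p) × EuclideanSpace ℝ (Fin m)) ×
         (EuclideanSpace ℝ (Fin p) × EuclideanSpace ℝ (Fin m)) → ℂ)
    (T : EuclideanSpace ℝ (Fin m) ≃ₗ[ℝ] EuclideanSpace ℝ (Fin m)) {ℏ : ℝ} (hℏ : 0 < ℏ) :
    ((ℏ ^ m : ℝ) : ℂ)⁻¹ * ∫ x : EuclideanSpace ℝ (Fin p) × EuclideanSpace ℝ (Fin m),
        fhat2 p m h x (0, ℏ⁻¹ • T x.2) =
      (((2 * Real.pi) ^ m / |LinearMap.det (T : EuclideanSpace ℝ (Fin m) →ₗ[ℝ] _)| : ℝ) : ℂ) *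
        ∫ z : EuclideanSpace ℝ (Fin p) × EuclideanSpace ℝ (Fin m),
          fourierSnd (fun ξ => h ((z.1, (2 * Real.pi * ℏ) • T.symm z.2), ξ)) z.2 := by
  have hc : 2 * Real.pi * ℏ ≠ 0 := by positivity
  simp_rw [fhat2_zero_fst_eq_fourierSnd, smul_smul, ← mul_inv]
  rw [integral_comp_inv_smul_snd T hc (fun x w => fourierSnd (fun ξ => h (x, ξ)) w),
    finrank_euclideanSpace_fin, Complex.real_smul, ← mul_assoc]
  congr 1
  have hℏ' : (ℏ : ℂ) ≠ 0 := by exact_mod_cast hℏ.ne'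
  rw [abs_of_pos (by positivity)]
  push_cast
  field_simp
  ring

theorem statement9_general (p m : ℕ)
    (g' : EuclideanSpace ℝ (Fin m) →ₗ[ℝ] EuclideanSpace ℝ (Fin m))
    (hg : IsUnit (g' - LinearMap.id))
    (h : SchwartzMap ((EuclideanSpace ℝ (Fin p) × EuclideanSpace ℝ (Fin m)) ×
          (EuclideanSpace ℝ (Fin p) × EuclideanSpace ℝ (Fin m))) ℂ) :
    Tendsto
      (fun ℏ : ℝ => ((ℏ ^ m : ℝ) : ℂ)⁻¹ *
        ∫ x : EuclideanSpace ℝ (Fin p) × EuclideanSpace ℝ (Fin m),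
          fhat2 p m ⇑h x ((0 : EuclideanSpace ℝ (Fin p)), ℏ⁻¹ • (g' x.2 - x.2)))
      (nhdsWithin 0 (Set.Ioi 0))
      (nhds ((((2 * Real.pi) ^ m / |LinearMap.det (g' - LinearMap.id)| : ℝ) : ℂ) *
        ∫ x₀ : EuclideanSpace ℝ (Fin p), ∫ ξ₁ : EuclideanSpace ℝ (Fin p),
          h ((x₀, (0 : EuclideanSpace ℝ (Fin m))),
             (ξ₁, (0 : EuclideanSpace ℝ (Fin m)))))) := by
  set T := LinearMap.GeneralLinearGroup.generalLinearEquiv ℝ _ hg.unit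
  have hT : (T : EuclideanSpace ℝ (Fin m) →ₗ[ℝ] _) = g' - LinearMap.id := hg.unit_spec
  have hTx : ∀ v, g' v - v = T v := fun v => by rw [← LinearEquiv.coe_coe, hT]; rfl
  simp_rw [hTx]
  have hc : Tendsto (fun ℏ : ℝ => 2 * Real.pi * ℏ) (𝓝[>] 0) (𝓝 0) :=
    (Continuous.tendsto' (by fun_prop) 0 0 (by simp)).mono_left nhdsWithin_le_nhds
  have hlim := ((h.tendsto_integral_fourierSnd_smul (T.symm : _ →ₗ[ℝ] _)).comp hc).const_mul
    ((((2 * Real.pi) ^ m / |LinearMap.det (T : EuclideanSpace ℝ (Fin m) →ₗ[ℝ] _)| : ℝ) : ℂ))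
  rw [← hT, ← h.integral_fourierSnd_fst_zero]
  exact hlim.congr' (eventually_nhdsWithin_of_forall fun ℏ hℏ =>
    (inv_pow_mul_integral_fhat2_eq p m h T hℏ).symm)

/-- Let `p, m ≥ 1`, `n = p + m`, write points of `ℝⁿ` as `x = (x₀, v)`
with `x₀ ∈ ℝᵖ`, `v ∈ ℝᵐ`, and let `g = 1 ⊕ g′` act as the identity on `ℝᵖ` and as `g′` on
`ℝᵐ`, where `g′ − 1` is invertible (so `gx − x = (0, g′v − v)`).  Then for every Schwartz
`h` on `ℝⁿ×ℝⁿ`: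
`lim_{ℏ→0⁺} ℏ^{−m} ∫ ĥ(x, (gx−x)/ℏ) dx
  = ((2π)ᵐ/|det(g′−1)|) ∫∫ h((x₀,0),(ξ₁,0)) dξ₁ dx₀`. -/
theorem statement9 (p m : ℕ) (hp : 1 ≤ p) (hm : 1 ≤ m)
    (g' : EuclideanSpace ℝ (Fin m) →ₗ[ℝ] EuclideanSpace ℝ (Fin m))
    (hg : IsUnit (g' - LinearMap.id))
    (h : SchwartzMap ((EuclideanSpace ℝ (Fin p) × EuclideanSpace ℝ (Fin m)) ×
          (EuclideanSpace ℝ (Fin p) × EuclideanSpace ℝ (Fin m))) ℂ) :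
    Tendsto
      (fun ℏ : ℝ => ((ℏ ^ m : ℝ) : ℂ)⁻¹ *
        ∫ x : EuclideanSpace ℝ (Fin p) × EuclideanSpace ℝ (Fin m),
          fhat2 p m ⇑h x ((0 : EuclideanSpace ℝ (Fin p)), ℏ⁻¹ • (g' x.2 - x.2)))
      (nhdsWithin 0 (Set.Ioi 0))
      (nhds ((((2 * Real.pi) ^ m / |LinearMap.det (g' - LinearMap.id)| : ℝ) : ℂ) *
        ∫ x₀ : EuclideanSpace ℝ (Fin p), ∫ ξ₁ : EuclideanSpace ℝ (Fin p),
          h ((x₀, (0 : EuclideanSpace ℝ (Fin m))),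
             (ξ₁, (0 : EuclideanSpace ℝ (Fin m)))))) :=
  statement9_general p m g' hg h
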